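/- Let G be a topological group and f : G → ℝ a bounded right uniformly continuous function. Then f is an SUC function if and only if every element ω of the cyclic system X_f is both left and right uniformly continuous. -/

import Mathlib

/-!
If `f g = F (g • x₀)` on a compact SUC flow `X`, then `X_f` lies in the compact image of
`y ↦ (h ↦ F (h • y))`, and for such a function left uniform continuity is the SUC condition at `y`
read through the uniformly continuous `F`. Right uniform continuity is a closed condition that
holds uniformly for all right translates of `f`, so it passes to the whole of `X_f`.

Conversely, `X_f` itself is a compact flow under right translation. Its members are right
uniformly continuous with a common neighbourhood, hence equicontinuous, which makes the action
jointly continuous; and since the product uniformity is coarser than uniform convergence, left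
uniform continuity of each point gives the SUC property. Then `f` is recovered from the orbit of
`f ∈ X_f` by evaluation at `1`.
-/

open Filter Topology

universe u

variable (G : Type u) [Group G] [TopologicalSpace G]

/-- A compact (more generally, uniform) `G`-flow is strongly uniformly continuous (SUC). -/
def IsSUCFlow (X : Type u) [UniformSpace X] [MulAction G X] : Prop :=
  ∀ x₀ : X, ∀ ε ∈ uniformity X, ∃ U ∈ nhds (1 : G), ∀ g : G, ∀ u ∈ U,
    (g • u • x₀, g • x₀) ∈ ε

/-- `f : G → ℝ` is an SUC function: it comes from a compact SUC `G`-flow. -/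
def IsSUCFunction (f : G → ℝ) : Prop :=
  ∃ (X : Type u) (_ : UniformSpace X) (_ : CompactSpace X) (_ : T2Space X)
    (_ : MulAction G X) (_ : ContinuousSMul G X),
    IsSUCFlow G X ∧ ∃ (x₀ : X) (F : X → ℝ), Continuous F ∧ ∀ g : G, f g = F (g • x₀)

/-- `f` is right uniformly continuous. -/
def RightUC (f : G → ℝ) : Prop :=
  ∀ ε : ℝ, 0 < ε → ∃ U ∈ nhds (1 : G), ∀ u ∈ U, ∀ g : G, |f (u * g) - f g| < ε

/-- `f` is left uniformly continuous. -/
def LeftUC (f : G → ℝ) : Prop :=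
  ∀ ε : ℝ, 0 < ε → ∃ U ∈ nhds (1 : G), ∀ u ∈ U, ∀ g : G, |f (g * u) - f g| < ε

/-- The cyclic system `X_f`: the closure in `ℝ^G` (product topology) of the set of right
translates `h ↦ f (h * g)`. -/
def cyclicSystem (f : G → ℝ) : Set (G → ℝ) :=
  closure {ω : G → ℝ | ∃ g : G, ω = fun h => f (h * g)}

theorem Equicontinuous.continuous_uncurry {ι X α : Type*} [TopologicalSpace ι]
    [TopologicalSpace X] [UniformSpace α] {F : ι → X → α} (hF : Equicontinuous F)
    (hcont : ∀ x, Continuous fun i => F i x) : Continuous (Function.uncurry F) := by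
  refine continuous_iff_continuousAt.2 fun ⟨i₀, x₀⟩ => Uniform.tendsto_nhds_right.2 ?_
  intro V hV
  obtain ⟨W, hW, hWV⟩ := comp_mem_uniformity_sets hV
  have near_i₀ : ∀ᶠ i in 𝓝 i₀, (F i₀ x₀, F i x₀) ∈ W :=
    Uniform.tendsto_nhds_right.1 ((hcont x₀).tendsto i₀) hW
  have near_x₀ : ∀ᶠ x in 𝓝 x₀, ∀ i, (F i x₀, F i x) ∈ W := hF x₀ W hW
  exact (near_i₀.prod_nhds near_x₀).mono fun p hp =>
    hWV (SetRel.prodMk_mem_comp hp.1 (hp.2 p.1))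

theorem exists_forall_dist_lt_of_mem_uniformity {ι β : Type*} [PseudoMetricSpace β]
    {ε : Set ((ι → β) × (ι → β))} (hε : ε ∈ uniformity (ι → β)) :
    ∃ δ > 0, ∀ a b : ι → β, (∀ i, dist (a i) (b i) < δ) → (a, b) ∈ ε := by
  obtain ⟨δ, hδ, hδε⟩ := (UniformFun.hasBasis_uniformity_of_basis ι β
    Metric.uniformity_basis_dist).mem_iff.1 (UniformFun.uniformContinuous_toFun hε)
  exact ⟨δ, hδ, fun a b hab => hδε (a := (UniformFun.ofFun a, UniformFun.ofFun b)) hab⟩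

section

variable {G : Type u} [Group G] {f : G → ℝ}

theorem cyclicSystem_subset_of_isClosed {S : Set (G → ℝ)} (hS : IsClosed S)
    (hf : ∀ g, (fun h => f (h * g)) ∈ S) : cyclicSystem G f ⊆ S :=
  closure_minimal (by rintro _ ⟨g, rfl⟩; exact hf g) hS

theorem mem_cyclicSystem_self : f ∈ cyclicSystem G f :=
  subset_closure ⟨1, by simp⟩

theorem comp_mul_right_mem_cyclicSystem {ω : G → ℝ} (hω : ω ∈ cyclicSystem G f) (g : G) :
    (fun h => ω (h * g)) ∈ cyclicSystem G f := by
  have hT : Continuous fun (ω : G → ℝ) (h : G) => ω (h * g) :=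
    continuous_pi fun h => continuous_apply (h * g)
  refine cyclicSystem_subset_of_isClosed (isClosed_closure.preimage hT) (fun a => ?_) hω
  exact subset_closure ⟨g * a, by simp [mul_assoc]⟩

theorem isCompact_cyclicSystem (hbd : ∃ M : ℝ, ∀ g : G, |f g| ≤ M) :
    IsCompact (cyclicSystem G f) := by
  obtain ⟨M, hM⟩ := hbd
  have hbox : cyclicSystem G f ⊆ Set.univ.pi fun _ => Set.Icc (-M) M :=
    cyclicSystem_subset_of_isClosed (isClosed_set_pi fun _ _ => isClosed_Icc)
      fun g h _ => abs_le.1 (hM _)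
  exact (isCompact_univ_pi fun _ => isCompact_Icc).of_isClosed_subset isClosed_closure hbox

theorem cyclicSystem_subset_range_smul {X : Type*} [TopologicalSpace X] [CompactSpace X]
    [MulAction G X] [ContinuousConstSMul G X] {F : X → ℝ} (hF : Continuous F) {x₀ : X}
    (hf : ∀ g, f g = F (g • x₀)) :
    cyclicSystem G f ⊆ Set.range fun y h => F (h • y) := by
  have hΦ : Continuous fun (y : X) (h : G) => F (h • y) :=
    continuous_pi fun h => hF.comp (continuous_const_smul h)
  refine cyclicSystem_subset_of_isClosed (isCompact_range hΦ).isClosed fun a => ⟨a • x₀, ?_⟩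
  funext h
  simp [hf, mul_smul]

instance : MulAction G (cyclicSystem G f) where
  smul g ω := ⟨fun h => ω.1 (h * g), comp_mul_right_mem_cyclicSystem ω.2 g⟩
  one_smul ω := Subtype.ext <| funext fun h => congrArg ω.1 (mul_one h)
  mul_smul a b ω := Subtype.ext <| funext fun h => congrArg ω.1 (mul_assoc h a b).symm

@[simp]
theorem coe_smul_cyclicSystem (g : G) (ω : cyclicSystem G f) :
    ((g • ω : cyclicSystem G f) : G → ℝ) = fun h => (ω : G → ℝ) (h * g) :=
  rfl

variable [TopologicalSpace G]

theorem IsSUCFlow.leftUC_comp_smul {X : Type u} [UniformSpace X] [MulAction G X]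
    (hX : IsSUCFlow G X) {F : X → ℝ} (hF : UniformContinuous F) (y : X) :
    LeftUC G fun h => F (h • y) := by
  intro ε hε
  obtain ⟨U, hU, hUy⟩ := hX y _ (hF (Metric.dist_mem_uniformity hε))
  exact ⟨U, hU, fun u hu g => by simpa [mul_smul, Real.dist_eq] using hUy g u hu⟩

theorem isSUCFlow_cyclicSystem (hL : ∀ ω ∈ cyclicSystem G f, LeftUC G ω) :
    IsSUCFlow G (cyclicSystem G f) := by
  intro x₀ ε hε
  rw [uniformity_subtype] at hε
  obtain ⟨ε', hε', hε'ε⟩ := mem_comap.1 hε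
  obtain ⟨δ, hδ, hδε'⟩ := exists_forall_dist_lt_of_mem_uniformity hε'
  obtain ⟨U, hU, hUx₀⟩ := hL x₀ x₀.2 δ hδ
  refine ⟨U, hU, fun g u hu => hε'ε (hδε' _ _ fun h => ?_)⟩
  simpa [Real.dist_eq, mul_assoc] using hUx₀ u hu (h * g)

namespace RightUC

/-- The bound is a closed condition on `ω` that holds for every right translate of `f`. -/
theorem exists_nhds_forall_mem_cyclicSystem (hruc : RightUC G f) {ε : ℝ} (hε : 0 < ε) :
    ∃ U ∈ 𝓝 (1 : G), ∀ ω ∈ cyclicSystem G f, ∀ u ∈ U, ∀ g, |ω (u * g) - ω g| ≤ ε := by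
  obtain ⟨U, hU, hUf⟩ := hruc ε hε
  refine ⟨U, hU, fun ω hω => cyclicSystem_subset_of_isClosed
    (S := {ω | ∀ u ∈ U, ∀ g, |ω (u * g) - ω g| ≤ ε}) ?_ (fun a u hu g => ?_) hω⟩
  · simp only [Set.ofPred_forall]
    exact isClosed_biInter fun u _ => isClosed_iInter fun g =>
      isClosed_le ((continuous_apply (u * g)).sub (continuous_apply g)).abs continuous_const
  · simpa [mul_assoc] using (hUf u hu (g * a)).le

theorem of_mem_cyclicSystem (hruc : RightUC G f) {ω : G → ℝ} (hω : ω ∈ cyclicSystem G f) :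
    RightUC G ω := by
  intro ε hε
  obtain ⟨U, hU, hUω⟩ := hruc.exists_nhds_forall_mem_cyclicSystem (half_pos hε)
  exact ⟨U, hU, fun u hu g => (hUω ω hω u hu g).trans_lt (half_lt_self hε)⟩

theorem equicontinuous_cyclicSystem [ContinuousMul G] (hruc : RightUC G f) :
    Equicontinuous ((↑) : cyclicSystem G f → G → ℝ) := by
  intro x₀
  refine Metric.equicontinuousAt_iff_right.2 fun ε hε => ?_
  obtain ⟨U, hU, hUω⟩ := hruc.exists_nhds_forall_mem_cyclicSystem (half_pos hε)
  have hx : ∀ᶠ x in 𝓝 x₀, x * x₀⁻¹ ∈ U :=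
    (continuous_mul_const x₀⁻¹).continuousAt.preimage_mem_nhds (by simpa using hU)
  filter_upwards [hx] with x hx ω
  have := hUω ω ω.2 _ hx x₀
  rw [inv_mul_cancel_right, abs_sub_comm, ← Real.dist_eq] at this
  exact this.trans_lt (half_lt_self hε)

theorem continuousSMul_cyclicSystem [ContinuousMul G] (hruc : RightUC G f) :
    ContinuousSMul G (cyclicSystem G f) := by
  have heval : Continuous fun p : cyclicSystem G f × G => (p.1 : G → ℝ) p.2 :=
    hruc.equicontinuous_cyclicSystem.continuous_uncurry fun x =>
      (continuous_apply x).comp continuous_subtype_val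
  refine ⟨Continuous.subtype_mk (continuous_pi fun h => ?_) _⟩
  exact heval.comp (continuous_snd.prodMk (continuous_const.mul continuous_fst))

end RightUC

end

/-- A bounded right uniformly continuous `f : G → ℝ` is an SUC function iff
every element of the cyclic system `X_f` is both left and right uniformly continuous. -/
theorem statement4 [IsTopologicalGroup G] (f : G → ℝ) (hbd : ∃ M : ℝ, ∀ g : G, |f g| ≤ M)
    (hruc : RightUC G f) :
    IsSUCFunction G f ↔ ∀ ω ∈ cyclicSystem G f, LeftUC G ω ∧ RightUC G ω := by
  constructor
  · rintro ⟨X, _, _, _, _, _, hX, x₀, F, hF, hfF⟩ ω hω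
    obtain ⟨y, rfl⟩ := cyclicSystem_subset_range_smul hF hfF hω
    exact ⟨hX.leftUC_comp_smul (CompactSpace.uniformContinuous_of_continuous hF) y,
      hruc.of_mem_cyclicSystem hω⟩
  · intro h
    have : CompactSpace (cyclicSystem G f) :=
      isCompact_iff_compactSpace.1 (isCompact_cyclicSystem hbd)
    exact ⟨cyclicSystem G f, inferInstance, inferInstance, inferInstance, inferInstance,
      hruc.continuousSMul_cyclicSystem, isSUCFlow_cyclicSystem fun ω hω => (h ω hω).1,
      ⟨f, mem_cyclicSystem_self⟩, fun ω => (ω : G → ℝ) 1,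
      (continuous_apply 1).comp continuous_subtype_val, fun g => by simp⟩
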